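/- Let ξ ∈ (-1, 1] and define f(σ) = e^{2 - 2σ²(1+ξ)} - 2 e^{(1-σ²)(1+ξ)} for σ > 0. Then f is minimized at σ* = sqrt((1-ξ)/(1+ξ)). -/
import Mathlib

open Real

theorem rff_optimal_sigma (ξ : ℝ) (hξ : ξ ∈ Set.Ioc (-1 : ℝ) 1) (σ : ℝ) (hσ : 0 < σ) :
    (fun s : ℝ => Real.exp (2 - 2 * s ^ 2 * (1 + ξ)) - 2 * Real.exp ((1 - s ^ 2) * (1 + ξ)))
        (Real.sqrt ((1 - ξ) / (1 + ξ)))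
      ≤ (fun s : ℝ => Real.exp (2 - 2 * s ^ 2 * (1 + ξ)) - 2 * Real.exp ((1 - s ^ 2) * (1 + ξ))) σ := by
  obtain ⟨h1, h2⟩ := hξ
  have ha : (0:ℝ) < 1 + ξ := by linarith
  have hs : Real.sqrt ((1 - ξ) / (1 + ξ)) ^ 2 = (1 - ξ) / (1 + ξ) :=
    Real.sq_sqrt (div_nonneg (by linarith) ha.le)
  simp only
  rw [hs]
  have e1 : 2 - 2 * ((1 - ξ) / (1 + ξ)) * (1 + ξ) = 2 * ξ := by field_simp; ring
  have e2 : (1 - (1 - ξ) / (1 + ξ)) * (1 + ξ) = 2 * ξ := by field_simp; ring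
  rw [e1, e2]
  set t := Real.exp (-(σ ^ 2 * (1 + ξ))) with ht
  have hA : Real.exp (2 - 2 * σ ^ 2 * (1 + ξ)) = Real.exp 2 * t ^ 2 := by
    have h : Real.exp 2 * t ^ 2
        = Real.exp (2 + (-(σ ^ 2 * (1 + ξ)) + -(σ ^ 2 * (1 + ξ)))) := by
      rw [Real.exp_add, Real.exp_add, ht]; ring
    rw [h]; ring_nf
  have hB : Real.exp ((1 - σ ^ 2) * (1 + ξ)) = Real.exp (1 + ξ) * t := by
    rw [ht, ← Real.exp_add]; ring_nf
  have hE2 : Real.exp 2 = Real.exp 1 * Real.exp 1 := by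
    rw [← Real.exp_add]; norm_num
  have hE : Real.exp (1 + ξ) = Real.exp 1 * Real.exp ξ := Real.exp_add 1 ξ
  have hEx : Real.exp (2 * ξ) = Real.exp ξ * Real.exp ξ := by
    rw [← Real.exp_add]; ring_nf
  rw [hA, hB, hE2, hE, hEx]
  nlinarith [sq_nonneg (Real.exp 1 * t - Real.exp ξ)]
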